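/- arXiv:1808.00363 — 3 statements merged into one kernel-verified Lean document; each statement's English description precedes it below -/
import Mathlib

section
/- If F(x) and A_r(x,u) satisfy F(x) = x·Φ(F(x)) and A_r(x,u) = x·Φ(A_r(x,u)) + (1 − 1/u)F_r(xu), then the partial derivative of A_r with respect to u evaluated at u = 1 equals F_r(x)/(1 − x·Φ'(F(x))), as formal power series, provided 1 − x·Φ'(F(x)) is invertible (its constant term is nonzero). -/
open PowerSeries

/-- composition `Φ ∘ g` of formal power series (intended for `g` with zero constant
term, in which case the coefficient of `xⁿ` is the finite sum
`Σ_{k ≤ n} [tᵏ]Φ · [xⁿ](gᵏ)`). -/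
noncomputable def pscomp {R : Type*} [CommSemiring R] (Φ g : PowerSeries R) : PowerSeries R :=
  PowerSeries.mk fun n =>
    ∑ k ∈ Finset.range (n + 1), (PowerSeries.coeff k Φ) * PowerSeries.coeff n (g ^ k)

/-- the coefficientwise partial derivative `∂/∂u` of a power series in `x` with
polynomial coefficients in `u`, evaluated at `u = 1` -/
noncomputable def duAtOne (A : PowerSeries (Polynomial ℝ)) : PowerSeries ℝ :=
  PowerSeries.mk fun n =>
    Polynomial.eval 1 (Polynomial.derivative (PowerSeries.coeff n A))

/-! Differentiating `u·A = u·x·Φ(A) + (u - 1)·F_r(xu)` in `u` at `u = 1` gives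
`F + ∂ᵤA = x·Φ(F) + x·Φ'(F)·∂ᵤA + F_r`, and `F = x·Φ(F)` cancels the first terms.
Two facts make this formal: `∂ᵤ|_{u=1}` is a derivation over evaluation at `u = 1`,
and it obeys the chain rule for `pscomp`, because for `A` without constant term the
truncated sums defining `pscomp` may be extended to any larger range. -/

section Composition

variable {R S : Type*} [CommSemiring R] [CommSemiring S]

theorem coeff_pow_eq_zero_of_lt {g : PowerSeries R} (hg : constantCoeff g = 0) {i j : ℕ}
    (h : i < j) : coeff i (g ^ j) = 0 :=
  X_pow_dvd_iff.mp (pow_dvd_pow_of_dvd (X_dvd_iff.mpr hg) j) i h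

theorem coeff_self_pow_mul_eq_zero {g K : PowerSeries R} (hg : constantCoeff g = 0)
    (hK : constantCoeff K = 0) (n : ℕ) : coeff n (g ^ n * K) = 0 := by
  have hdvd : X ^ (n + 1) ∣ g ^ n * K :=
    pow_succ (X : PowerSeries R) n ▸
      mul_dvd_mul (pow_dvd_pow_of_dvd (X_dvd_iff.mpr hg) n) (X_dvd_iff.mpr hK)
  exact X_pow_dvd_iff.mp hdvd n n.lt_succ_self

theorem coeff_pscomp_of_le (Φ : PowerSeries R) {g : PowerSeries R} (hg : constantCoeff g = 0)
    {n N : ℕ} (hnN : n ≤ N) :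
    coeff n (pscomp Φ g) = ∑ k ∈ Finset.range (N + 1), coeff k Φ * coeff n (g ^ k) := by
  rw [pscomp, coeff_mk]
  refine Finset.sum_subset (Finset.range_subset_range.mpr (by omega)) fun k _ hk => ?_
  rw [coeff_pow_eq_zero_of_lt hg (by simpa using hk), mul_zero]

theorem coeff_pscomp_mul (Φ : PowerSeries R) {g : PowerSeries R} (hg : constantCoeff g = 0)
    (K : PowerSeries R) (n : ℕ) :
    coeff n (pscomp Φ g * K) =
      ∑ k ∈ Finset.range (n + 1), coeff k Φ * coeff n (g ^ k * K) := by
  simp_rw [coeff_mul, Finset.mul_sum]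
  rw [Finset.sum_comm]
  refine Finset.sum_congr rfl fun p hp => ?_
  rw [coeff_pscomp_of_le Φ hg (Finset.HasAntidiagonal.antidiagonal.fst_le hp), Finset.sum_mul]
  simp only [mul_assoc]

theorem map_pscomp (f : R →+* S) (Φ g : PowerSeries R) :
    map f (pscomp Φ g) = pscomp (map f Φ) (map f g) := by
  ext n
  simp [pscomp, ← map_pow]

end Composition

section DuAtOne

local notation "ev₁" => PowerSeries.map (Polynomial.evalRingHom (1 : ℝ))

theorem coeff_duAtOne (A : PowerSeries (Polynomial ℝ)) (n : ℕ) :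
    coeff n (duAtOne A) = (coeff n A).derivative.eval 1 :=
  coeff_mk _ _

theorem duAtOne_add (P Q : PowerSeries (Polynomial ℝ)) :
    duAtOne (P + Q) = duAtOne P + duAtOne Q := by
  ext n; simp [coeff_duAtOne]

theorem duAtOne_sub (P Q : PowerSeries (Polynomial ℝ)) :
    duAtOne (P - Q) = duAtOne P - duAtOne Q := by
  ext n; simp [coeff_duAtOne]

theorem duAtOne_mul (P Q : PowerSeries (Polynomial ℝ)) :
    duAtOne (P * Q) = duAtOne P * ev₁ Q + ev₁ P * duAtOne Q := by
  ext n
  simp [coeff_duAtOne, coeff_mul, Finset.sum_add_distrib, Polynomial.derivative_mul,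
    Polynomial.eval_finsetSum]

theorem duAtOne_C (p : Polynomial ℝ) : duAtOne (C p) = C (p.derivative.eval 1) := by
  ext n
  rcases eq_or_ne n 0 with rfl | hn <;> simp [coeff_duAtOne, coeff_C, *]

theorem duAtOne_map_C (f : PowerSeries ℝ) : duAtOne (map Polynomial.C f) = 0 := by
  ext n; simp [coeff_duAtOne]

theorem duAtOne_one : duAtOne 1 = 0 := by
  simpa using duAtOne_C 1

theorem duAtOne_X : duAtOne X = 0 := by
  simpa using duAtOne_map_C X

theorem map_eval_map_C (f : PowerSeries ℝ) : ev₁ (map Polynomial.C f) = f := by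
  ext n; simp

theorem constantCoeff_duAtOne {A : PowerSeries (Polynomial ℝ)} (hA : constantCoeff A = 0) :
    constantCoeff (duAtOne A) = 0 := by
  rw [← coeff_zero_eq_constantCoeff_apply, coeff_duAtOne, coeff_zero_eq_constantCoeff_apply, hA]
  simp

theorem duAtOne_pow_succ (A : PowerSeries (Polynomial ℝ)) (j : ℕ) :
    duAtOne (A ^ (j + 1)) = C ((j : ℝ) + 1) * (ev₁ A ^ j * duAtOne A) := by
  induction j with
  | zero => simp
  | succ j ih =>
    rw [pow_succ, duAtOne_mul, ih, map_pow]
    simp only [Nat.cast_succ, map_add, map_one]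
    ring

theorem duAtOne_pscomp (φ : PowerSeries ℝ) {A : PowerSeries (Polynomial ℝ)}
    (hA : constantCoeff A = 0) :
    duAtOne (pscomp (map Polynomial.C φ) A) =
      pscomp (d⁄dX ℝ φ) (ev₁ A) * duAtOne A := by
  have hevA : constantCoeff (ev₁ A) = 0 := by
    rw [← coeff_zero_eq_constantCoeff_apply, coeff_map, coeff_zero_eq_constantCoeff_apply, hA,
      map_zero]
  ext n
  have hlhs : coeff n (duAtOne (pscomp (map Polynomial.C φ) A)) =
      ∑ k ∈ Finset.range (n + 1), coeff k φ * coeff n (duAtOne (A ^ k)) := by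
    simp [pscomp, coeff_duAtOne, Polynomial.eval_finsetSum]
  rw [hlhs, coeff_pscomp_mul _ hevA, Finset.sum_range_succ', Finset.sum_range_succ,
    coeff_self_pow_mul_eq_zero hevA (constantCoeff_duAtOne hA), mul_zero, add_zero,
    pow_zero, duAtOne_one, map_zero, mul_zero, add_zero]
  refine Finset.sum_congr rfl fun j _ => ?_
  rw [duAtOne_pow_succ, coeff_C_mul, coeff_derivative]
  ring

end DuAtOne

theorem du_gfBiv_at_one_general (wseq : ℕ → ℝ)
    (Φ F Fr : PowerSeries ℝ) (hΦ : Φ = PowerSeries.mk wseq)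
    (hF : F = PowerSeries.X * pscomp Φ F)
    (A : PowerSeries (Polynomial ℝ))
    (hA0 : PowerSeries.constantCoeff A = 0)
    (hAu1 : PowerSeries.map (Polynomial.evalRingHom (1 : ℝ)) A = F)
    (hA : PowerSeries.C (Polynomial.X : Polynomial ℝ) * A =
      PowerSeries.C (Polynomial.X : Polynomial ℝ) *
        (PowerSeries.X * pscomp (PowerSeries.mk fun k => Polynomial.C (wseq k)) A) +
      (PowerSeries.C (Polynomial.X : Polynomial ℝ) - 1) *
        (PowerSeries.mk fun n => Polynomial.C (PowerSeries.coeff n Fr) * Polynomial.X ^ n))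
    (hinv : PowerSeries.constantCoeff
      (1 - PowerSeries.X * pscomp (PowerSeries.derivativeFun Φ) F) ≠ 0) :
    duAtOne A =
      Fr * (1 - PowerSeries.X * pscomp (PowerSeries.derivativeFun Φ) F)⁻¹ := by
  have hlift : (mk fun k => Polynomial.C (wseq k)) = map Polynomial.C Φ := by
    ext k; simp [hΦ]
  have hFr : map (Polynomial.evalRingHom 1)
      (mk fun n => Polynomial.C (coeff n Fr) * Polynomial.X ^ n) = Fr := by
    ext n; simp
  have hdiff :
      F + duAtOne A = X * pscomp Φ F + X * (pscomp (d⁄dX ℝ Φ) F * duAtOne A) + Fr := by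
    have h := congrArg duAtOne hA
    rw [hlift] at h
    simpa only [duAtOne_mul, duAtOne_add, duAtOne_sub, duAtOne_C, duAtOne_one, duAtOne_X,
      duAtOne_pscomp Φ hA0, map_mul, map_sub, map_one, map_C, map_X, map_pscomp, map_eval_map_C,
      hAu1, hFr, Polynomial.derivative_X, Polynomial.eval_one, Polynomial.coe_evalRingHom,
      Polynomial.eval_X, one_mul, zero_mul, add_zero, zero_add, sub_self, sub_zero] using h
  rw [eq_mul_inv_iff_mul_eq hinv, show Φ.derivativeFun = d⁄dX ℝ Φ from rfl]
  linear_combination hdiff - hF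

/-- If `F(x) = x·Φ(F(x))` and `A_r(x,u) = x·Φ(A_r(x,u)) + (1 − 1/u)·F_r(xu)` (the
latter stated after multiplication by `u`), then
`∂A_r/∂u |_{u=1} = F_r(x) / (1 − x·Φ'(F(x)))` as formal power series, provided
`1 − x·Φ'(F(x))` is invertible (its constant term is nonzero). -/
theorem du_gfBiv_at_one (wseq : ℕ → ℝ) (hw : ∀ k, 0 ≤ wseq k) (hw0 : wseq 0 = 1)
    (Φ F Fr : PowerSeries ℝ) (hΦ : Φ = PowerSeries.mk wseq)
    (hF0 : PowerSeries.constantCoeff F = 0)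
    (hFr0 : PowerSeries.constantCoeff Fr = 0)
    (hF : F = PowerSeries.X * pscomp Φ F)
    (A : PowerSeries (Polynomial ℝ))
    (hA0 : PowerSeries.constantCoeff A = 0)
    (hAu1 : PowerSeries.map (Polynomial.evalRingHom (1 : ℝ)) A = F)
    (hA : PowerSeries.C (Polynomial.X : Polynomial ℝ) * A =
      PowerSeries.C (Polynomial.X : Polynomial ℝ) *
        (PowerSeries.X * pscomp (PowerSeries.mk fun k => Polynomial.C (wseq k)) A) +
      (PowerSeries.C (Polynomial.X : Polynomial ℝ) - 1) *
        (PowerSeries.mk fun n => Polynomial.C (PowerSeries.coeff n Fr) * Polynomial.X ^ n))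
    (hinv : PowerSeries.constantCoeff
      (1 - PowerSeries.X * pscomp (PowerSeries.derivativeFun Φ) F) ≠ 0) :
    duAtOne A =
      Fr * (1 - PowerSeries.X * pscomp (PowerSeries.derivativeFun Φ) F)⁻¹ :=
  du_gfBiv_at_one_general wseq Φ F Fr hΦ hF A hA0 hAu1 hA hinv
end

section
/- Let Φ be a power series with nonnegative coefficients, radius of convergence R > 0, Φ(0) = 1, and suppose there exists τ with 0 < τ < R and Φ(τ) = τ·Φ'(τ). Set ρ = τ/Φ(τ). Define c_1 = ρ and c_r = ρ·Φ(c_{r-1}) for r > 1. Then (c_r) is increasing and converges to τ. -/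
open Filter Topology Set

/-!
The map `f x = ρ Φ(x)` sends `[0, τ]` into itself (`Φ` is increasing there and `f τ = τ`), and it
lies strictly above the diagonal on `[0, τ)`: the condition `Φ(τ) = τ Φ'(τ)` says that the tangent
to the strictly convex function `Φ` at `τ` passes through the origin, so `Φ(x) > x Φ(τ)/τ` for
`0 ≤ x < τ`. Hence the orbit `c_r` of `ρ ∈ [0, τ]` increases, stays below `τ`, and its limit is a
fixed point of the continuous map `f` in `[0, τ]`, which can only be `τ`.
-/

lemma pow_sub_pow_le_mul_sub {x y : ℝ} (hx : 0 ≤ x) (hxy : x ≤ y) (k : ℕ) :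
    y ^ k - x ^ k ≤ k * y ^ (k - 1) * (y - x) := by
  rcases hxy.eq_or_lt with rfl | hlt
  · simp
  have h := (convexOn_pow k).slope_le_of_hasDerivAt hx (hx.trans hlt.le) hlt (hasDerivAt_pow k y)
  rwa [slope_def_field, div_le_iff₀ (sub_pos.2 hlt)] at h

lemma pow_sub_pow_lt_mul_sub {x y : ℝ} (hx : 0 ≤ x) (hxy : x < y) {k : ℕ} (hk : 2 ≤ k) :
    y ^ k - x ^ k < k * y ^ (k - 1) * (y - x) := by
  have h := (strictConvexOn_pow hk).slope_lt_of_hasDerivAt hx (hx.trans hxy.le) hxy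
    (hasDerivAt_pow k y)
  rwa [slope_def_field, div_lt_iff₀ (sub_pos.2 hxy)] at h

section PowerSeries

variable {w : ℕ → ℝ} {s : ℝ}

lemma summable_mul_pow_of_le (hw : ∀ k, 0 ≤ w k) (hs : Summable fun k => w k * s ^ k) {x : ℝ}
    (hx : 0 ≤ x) (hxs : x ≤ s) : Summable fun k => w k * x ^ k :=
  hs.of_nonneg_of_le (fun k => mul_nonneg (hw k) (pow_nonneg hx k))
    fun k => mul_le_mul_of_nonneg_left (pow_le_pow_left₀ hx hxs k) (hw k)

lemma one_le_tsum_mul_pow (hw : ∀ k, 0 ≤ w k) (hw0 : w 0 = 1) {x : ℝ} (hx : 0 ≤ x)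
    (hsx : Summable fun k => w k * x ^ k) : 1 ≤ ∑' k, w k * x ^ k := by
  simpa [hw0] using hsx.le_tsum 0 fun k _ => mul_nonneg (hw k) (pow_nonneg hx k)

lemma monotoneOn_tsum_mul_pow (hw : ∀ k, 0 ≤ w k) (hs : Summable fun k => w k * s ^ k) :
    MonotoneOn (fun x => ∑' k, w k * x ^ k) (Icc 0 s) := fun _ hx _ hy hxy =>
  Summable.tsum_le_tsum
    (fun k => mul_le_mul_of_nonneg_left (pow_le_pow_left₀ hx.1 hxy k) (hw k))
    (summable_mul_pow_of_le hw hs hx.1 hx.2) (summable_mul_pow_of_le hw hs hy.1 hy.2)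

lemma continuousOn_tsum_mul_pow (hw : ∀ k, 0 ≤ w k) (hs : Summable fun k => w k * s ^ k) :
    ContinuousOn (fun x => ∑' k, w k * x ^ k) (Icc (-s) s) :=
  continuousOn_tsum (fun k => (continuous_const.mul (continuous_pow k)).continuousOn) hs
    fun k x hx => by
      rw [Real.norm_eq_abs, abs_mul, abs_of_nonneg (hw k), abs_pow]
      exact mul_le_mul_of_nonneg_left (pow_le_pow_left₀ (abs_nonneg x) (abs_le.2 hx) k) (hw k)

lemma summable_nat_mul_mul_pow_pred (hw : ∀ k, 0 ≤ w k) (hs : Summable fun k => w k * s ^ k)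
    {x : ℝ} (hx : 0 < x) (hxs : x < s) : Summable fun k : ℕ => k * w k * x ^ (k - 1) := by
  have hs0 : 0 < s := hx.trans hxs
  have hr : ‖x / s‖ < 1 := by
    rw [Real.norm_eq_abs, abs_of_pos (div_pos hx hs0)]
    exact (div_lt_one hs0).2 hxs
  have hB : ∀ k, w k * s ^ k ≤ ∑' j, w j * s ^ j := fun k =>
    hs.le_tsum k fun j _ => mul_nonneg (hw j) (pow_nonneg hs0.le j)
  -- `k w_k x^(k-1) = k (x/s)^k · w_k s^k / x`, and `w_k s^k` is bounded by the sum.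
  refine ((summable_pow_mul_geometric_of_norm_lt_one 1 hr).mul_right
    ((∑' j, w j * s ^ j) / x)).of_nonneg_of_le
    (fun k => mul_nonneg (mul_nonneg k.cast_nonneg (hw k)) (pow_nonneg hx.le _)) fun k => ?_
  rcases k.eq_zero_or_pos with rfl | hk
  · simp
  calc (k : ℝ) * w k * x ^ (k - 1) = (k : ℝ) ^ 1 * (x / s) ^ k * (w k * s ^ k / x) := by
        rw [div_pow, ← pow_sub_one_mul hk.ne' x]
        field_simp
    _ ≤ (k : ℝ) ^ 1 * (x / s) ^ k * ((∑' j, w j * s ^ j) / x) := by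
        gcongr
        exact hB k

lemma tsum_mul_pow_sub_tsum_mul_pow_lt (hw : ∀ k, 0 ≤ w k) {k₀ : ℕ} (hk₀ : 2 ≤ k₀)
    (hwk₀ : 0 < w k₀) {x y : ℝ} (hx : 0 ≤ x) (hxy : x < y) (hy : Summable fun k => w k * y ^ k)
    (hy' : Summable fun k : ℕ => k * w k * y ^ (k - 1)) :
    ∑' k, w k * y ^ k - ∑' k, w k * x ^ k < (y - x) * ∑' k : ℕ, k * w k * y ^ (k - 1) := by
  have hx' : Summable fun k => w k * x ^ k := summable_mul_pow_of_le hw hy hx hxy.le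
  rw [← hy.tsum_sub hx', ← tsum_mul_left]
  refine Summable.tsum_lt_tsum (i := k₀) (fun k => ?_) ?_ (hy.sub hx') (hy'.mul_left _)
  · have := mul_le_mul_of_nonneg_left (pow_sub_pow_le_mul_sub hx hxy.le k) (hw k)
    linarith
  · have := mul_lt_mul_of_pos_left (pow_sub_pow_lt_mul_sub hx hxy hk₀) hwk₀
    linarith

lemma mul_tsum_mul_pow_lt_of_tsum_eq_mul_deriv (hw : ∀ k, 0 ≤ w k) {k₀ : ℕ} (hk₀ : 2 ≤ k₀)
    (hwk₀ : 0 < w k₀) (hs : Summable fun k => w k * s ^ k) {τ : ℝ} (hτ : 0 < τ) (hτs : τ < s)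
    (hcrit : ∑' k, w k * τ ^ k = τ * ∑' k : ℕ, k * w k * τ ^ (k - 1)) {x : ℝ} (hx : 0 ≤ x)
    (hxτ : x < τ) : x * ∑' k, w k * τ ^ k < τ * ∑' k, w k * x ^ k := by
  have h := tsum_mul_pow_sub_tsum_mul_pow_lt hw hk₀ hwk₀ hx hxτ
    (summable_mul_pow_of_le hw hs hτ.le hτs.le) (summable_nat_mul_mul_pow_pred hw hs hτ hτs)
  rw [hcrit] at h ⊢
  linarith [mul_lt_mul_of_pos_left h hτ]

end PowerSeries

section Iterate

variable {α : Type*}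

lemma monotone_iterate_of_mapsTo_of_le_self [Preorder α] {f : α → α} {S : Set α}
    (hmaps : MapsTo f S S) (hle : ∀ x ∈ S, x ≤ f x) {x : α} (hx : x ∈ S) :
    Monotone fun n => f^[n] x :=
  monotone_nat_of_le_succ fun n => by
    rw [Function.iterate_succ_apply']
    exact hle _ (hmaps.iterate n hx)

lemma tendsto_iterate_of_lt_self [ConditionallyCompleteLinearOrder α] [TopologicalSpace α]
    [OrderTopology α] {f : α → α} {a b : α} (hmaps : MapsTo f (Icc a b) (Icc a b))
    (hcont : ContinuousOn f (Icc a b)) (hle : ∀ x ∈ Icc a b, x ≤ f x)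
    (hlt : ∀ x ∈ Ico a b, x < f x) {x : α} (hx : x ∈ Icc a b) :
    Tendsto (fun n => f^[n] x) atTop (𝓝 b) := by
  have horbit : ∀ n, f^[n] x ∈ Icc a b := fun n => hmaps.iterate n hx
  have hlim := tendsto_atTop_ciSup (monotone_iterate_of_mapsTo_of_le_self hmaps hle hx)
    ⟨b, forall_mem_range.2 fun n => (horbit n).2⟩
  set L := ⨆ n, f^[n] x
  have hL : L ∈ Icc a b := isClosed_Icc.mem_of_tendsto hlim (Eventually.of_forall horbit)
  have hfL : f L = L := by
    refine tendsto_nhds_unique ((hcont L hL).tendsto.comp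
      (tendsto_nhdsWithin_iff.2 ⟨hlim, Eventually.of_forall horbit⟩)) ?_
    simpa only [Function.comp_def, ← Function.iterate_succ_apply' f] using
      (tendsto_add_atTop_iff_nat 1).2 hlim
  rcases hL.2.eq_or_lt with hLb | hLb
  · rwa [hLb] at hlim
  · exact absurd hfL (hlt L ⟨hL.1, hLb⟩).ne'

end Iterate

/-- Let `Φ(t) = Σ_k w_k tᵏ` be a power series with nonnegative coefficients, `Φ(0) = 1`,
some coefficient of index `> 1` positive, and radius of convergence `> τ`, where
`τ > 0` satisfies `Φ(τ) = τ·Φ'(τ)`, and set `ρ = τ/Φ(τ)`.  If `c_1 = ρ` and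
`c_r = ρ·Φ(c_{r-1})` for `r > 1`, then `(c_r)` is increasing and converges to `τ`. -/
theorem c_seq_increasing_tendsto_tau (w : ℕ → ℝ) (hw : ∀ k, 0 ≤ w k) (hw0 : w 0 = 1)
    (hwk : ∃ k, 1 < k ∧ 0 < w k)
    (τ : ℝ) (hτ : 0 < τ)
    (hrad : ∃ s, τ < s ∧ Summable fun k => w k * s ^ k)
    (Φ Φd : ℝ → ℝ)
    (hΦ : ∀ t, Φ t = ∑' k : ℕ, w k * t ^ k)
    (hΦd : ∀ t, Φd t = ∑' k : ℕ, (k : ℝ) * w k * t ^ (k - 1))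
    (hcrit : Φ τ = τ * Φd τ)
    (ρ : ℝ) (hρ : ρ = τ / Φ τ)
    (c : ℕ → ℝ) (hc1 : c 1 = ρ) (hcrec : ∀ r, 1 ≤ r → c (r + 1) = ρ * Φ (c r)) :
    (∀ r, 1 ≤ r → c r ≤ c (r + 1)) ∧ Tendsto c atTop (𝓝 τ) := by
  obtain ⟨s, hτs, hs⟩ := hrad
  obtain ⟨k₀, hk₀, hwk₀⟩ := hwk
  have hΦeq : Φ = fun t => ∑' k, w k * t ^ k := funext hΦ
  have hΦ1 : ∀ x ∈ Icc 0 τ, 1 ≤ Φ x := fun x hx => hΦ x ▸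
    one_le_tsum_mul_pow hw hw0 hx.1 (summable_mul_pow_of_le hw hs hx.1 (hx.2.trans hτs.le))
  have hΦτ : 0 < Φ τ := one_pos.trans_le (hΦ1 τ (right_mem_Icc.2 hτ.le))
  have hρΦτ : ρ * Φ τ = τ := by rw [hρ, div_mul_cancel₀ _ hΦτ.ne']
  have hρ0 : 0 < ρ := hρ ▸ div_pos hτ hΦτ
  have hρτ : ρ ∈ Icc 0 τ := ⟨hρ0.le, hρ ▸ div_le_self hτ.le (hΦ1 τ (right_mem_Icc.2 hτ.le))⟩
  have hΦmono : MonotoneOn Φ (Icc 0 τ) :=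
    (hΦeq ▸ monotoneOn_tsum_mul_pow hw hs).mono (Icc_subset_Icc_right hτs.le)
  set f := fun x => ρ * Φ x
  have hmaps : MapsTo f (Icc 0 τ) (Icc 0 τ) := fun x hx =>
    ⟨by positivity [hΦ1 x hx], hρΦτ ▸
      mul_le_mul_of_nonneg_left (hΦmono hx (right_mem_Icc.2 hτ.le) hx.2) hρ0.le⟩
  have hcont : ContinuousOn f (Icc 0 τ) := continuousOn_const.mul
    ((hΦeq ▸ continuousOn_tsum_mul_pow hw hs).mono (Icc_subset_Icc (by linarith) hτs.le))
  have hlt : ∀ x ∈ Ico 0 τ, x < f x := fun x hx => by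
    rw [show f x = ρ * Φ x from rfl, hρ, div_mul_eq_mul_div, lt_div_iff₀ hΦτ, hΦ, hΦ]
    exact mul_tsum_mul_pow_lt_of_tsum_eq_mul_deriv hw hk₀ hwk₀ hs hτ hτs
      (by rw [← hΦ, ← hΦd, hcrit]) hx.1 hx.2
  have hle : ∀ x ∈ Icc 0 τ, x ≤ f x := fun x hx =>
    hx.2.eq_or_lt.elim (fun h => h ▸ hρΦτ.ge) fun h => (hlt x ⟨hx.1, h⟩).le
  have hc : ∀ n, c (n + 1) = f^[n] ρ := fun n => by
    induction n with
    | zero => exact hc1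
    | succ n ih => rw [hcrec _ n.succ_pos, ih, Function.iterate_succ_apply' f]
  refine ⟨fun r hr => ?_, ?_⟩
  · obtain ⟨n, rfl⟩ := Nat.exists_eq_add_of_le' hr
    rw [hc, hc]
    exact monotone_iterate_of_mapsTo_of_le_self hmaps hle hρτ n.le_succ
  · rw [← tendsto_add_atTop_iff_nat 1]
    simpa only [hc] using tendsto_iterate_of_lt_self hmaps hcont hle hlt hρτ
end

section
/- With c_r as above (c_1 = ρ, c_r = ρ·Φ(c_{r-1}), c_r ↑ τ, ρΦ'(τ) = 1, Φ''(τ) > 0), the sequence 1/(τ − c_r) satisfies 1/(τ − c_r) = ρΦ''(τ)/2 · r + o(r) as r → ∞; equivalently τ − c_r ~ 2/(ρΦ''(τ) r). -/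
/-!
Write `d_r = τ - c_r`. Since `ρΦ(τ) = τ` and `ρΦ'(τ) = 1`, the recursion gives
`d_r - d_{r+1} = ρ (Φ(c_r) - Φ(τ) - Φ'(τ)(c_r - τ))`, so the second-order Taylor expansion of `Φ`
at `τ` (via L'Hôpital) yields `(d_r - d_{r+1}) / d_r² → ρΦ''(τ)/2`: `τ` is a parabolic fixed point
of `x ↦ ρΦ(x)`. Then `1/d_{r+1} - 1/d_r → ρΦ''(τ)/2`, and Cesàro averaging of these increments
gives `1/(r d_r) → ρΦ''(τ)/2`. The iterates stay in `(0, τ)`, away from the fixed point, because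
`x ↦ ρΦ(x)` is strictly increasing on `[0, τ]`.
-/

open Filter Topology

theorem summable_norm_natCast_mul_mul_pow_of_lt {a : ℕ → ℝ} {r s : ℝ}
    (ha : Summable fun k => ‖a k‖ * s ^ k) (hr : 0 ≤ r) (hrs : r < s) :
    Summable fun k : ℕ => ‖(k : ℝ) * a k‖ * r ^ k := by
  have hs : 0 < s := hr.trans_lt hrs
  obtain ⟨C, hC⟩ : ∃ C, ∀ k, ‖a k‖ * s ^ k ≤ C :=
    ⟨_, fun k => ha.le_tsum k fun j _ => by positivity⟩
  have hq : ‖r / s‖ < 1 := by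
    rw [Real.norm_of_nonneg (by positivity)]
    exact (div_lt_one hs).2 hrs
  refine Summable.of_nonneg_of_le (fun k => by positivity) (fun k => ?_)
    ((summable_pow_mul_geometric_of_norm_lt_one 1 hq).mul_left C)
  calc ‖(k : ℝ) * a k‖ * r ^ k = (k : ℝ) * (r / s) ^ k * (‖a k‖ * s ^ k) := by
        rw [norm_mul, Real.norm_natCast, div_pow]
        field_simp
    _ ≤ (k : ℝ) * (r / s) ^ k * C := by gcongr; exact hC k
    _ = C * ((k : ℝ) ^ 1 * (r / s) ^ k) := by ring

-- For `k < m` the truncated exponent makes the term constant, matching the factor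
-- `(k - m : ℕ) = 0`.
theorem hasDerivAt_tsum_mul_pow_sub {a : ℕ → ℝ} {s y : ℝ} (m : ℕ)
    (ha : Summable fun k => ‖a k‖ * s ^ k) (hy : |y| < s) :
    HasDerivAt (fun z => ∑' k, a k * z ^ (k - m))
      (∑' k, a k * ((k - m : ℕ) : ℝ) * y ^ (k - m - 1)) y := by
  obtain ⟨r, hyr, hrs⟩ := exists_between hy
  have hr : 0 < r := (abs_nonneg y).trans_lt hyr
  have hbound : ∀ k, ∀ z ∈ Set.Ioo (-r) r,
      ‖a k * ((k - m : ℕ) : ℝ) * z ^ (k - m - 1)‖ ≤ ‖(k : ℝ) * a k‖ * r ^ k / r ^ (m + 1) := by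
    intro k z hz
    rcases le_or_gt k m with hkm | hkm
    · rw [Nat.sub_eq_zero_of_le hkm, Nat.cast_zero, mul_zero, zero_mul, norm_zero]
      positivity
    have hz' : |z| ≤ r := abs_le.2 ⟨hz.1.le, hz.2.le⟩
    have hpow : r ^ k / r ^ (m + 1) = r ^ (k - m - 1) := by
      rw [div_eq_iff (by positivity), ← pow_add]
      congr 1
      omega
    calc ‖a k * ((k - m : ℕ) : ℝ) * z ^ (k - m - 1)‖
        = ((k - m : ℕ) : ℝ) * ‖a k‖ * |z| ^ (k - m - 1) := by
          rw [norm_mul, norm_mul, norm_pow, Real.norm_natCast, Real.norm_eq_abs z]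
          ring
      _ ≤ (k : ℝ) * ‖a k‖ * r ^ (k - m - 1) := by
          gcongr
          exact Nat.cast_le.2 (Nat.sub_le k m)
      _ = ‖(k : ℝ) * a k‖ * r ^ k / r ^ (m + 1) := by
          rw [mul_div_assoc, hpow, norm_mul, Real.norm_natCast]
  refine hasDerivAt_tsum_of_isPreconnected
    ((summable_norm_natCast_mul_mul_pow_of_lt ha hr.le hrs).div_const _) isOpen_Ioo
    (convex_Ioo _ _).isPreconnected (fun k z _ => ?_) hbound
    (y₀ := 0) ⟨by linarith, hr⟩ ?_ (abs_lt.1 hyr)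
  · exact ((hasDerivAt_pow (k - m) z).const_mul (a k)).congr_deriv (by ring)
  · refine summable_of_ne_finset_zero (s := Finset.range (m + 1)) fun k hk => ?_
    rw [Finset.mem_range, not_lt] at hk
    simp [zero_pow (by omega : k - m ≠ 0)]

theorem hasDerivAt_tsum_mul_pow {w : ℕ → ℝ} {s y : ℝ}
    (hw : Summable fun k => ‖w k‖ * s ^ k) (hy : |y| < s) :
    HasDerivAt (fun z => ∑' k, w k * z ^ k) (∑' k : ℕ, (k : ℝ) * w k * y ^ (k - 1)) y := by
  refine (hasDerivAt_tsum_mul_pow_sub 0 hw hy).congr_deriv (tsum_congr fun k => ?_)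
  simp only [Nat.sub_zero]
  ring

theorem hasDerivAt_tsum_natCast_mul_mul_pow_sub_one {w : ℕ → ℝ} {s y : ℝ}
    (hw : Summable fun k => ‖w k‖ * s ^ k) (hy : |y| < s) :
    HasDerivAt (fun z => ∑' k : ℕ, (k : ℝ) * w k * z ^ (k - 1))
      (∑' k : ℕ, (k : ℝ) * ((k : ℝ) - 1) * w k * y ^ (k - 2)) y := by
  obtain ⟨r, hyr, hrs⟩ := exists_between hy
  have hderiv := hasDerivAt_tsum_mul_pow_sub 1
    (summable_norm_natCast_mul_mul_pow_of_lt hw ((abs_nonneg y).trans hyr.le) hrs) hyr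
  refine hderiv.congr_deriv (tsum_congr fun k => ?_)
  cases k with
  | zero => simp
  | succ n => push_cast; ring_nf

theorem strictMonoOn_tsum_mul_pow {w : ℕ → ℝ} (hw : ∀ k, 0 ≤ w k) (hpos : ∃ k, k ≠ 0 ∧ 0 < w k)
    {s : ℝ} (hsum : Summable fun k => w k * s ^ k) :
    StrictMonoOn (fun x => ∑' k, w k * x ^ k) (Set.Icc 0 s) := by
  have hsummable : ∀ x ∈ Set.Icc 0 s, Summable fun k => w k * x ^ k := fun x hx =>
    hsum.of_nonneg_of_le (fun k => mul_nonneg (hw k) (pow_nonneg hx.1 k))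
      (fun k => mul_le_mul_of_nonneg_left (pow_le_pow_left₀ hx.1 hx.2 k) (hw k))
  obtain ⟨k, hk, hwk⟩ := hpos
  intro x hx y hy hxy
  refine (hsummable x hx).tsum_lt_tsum (i := k) (fun j => ?_) ?_ (hsummable y hy)
  · exact mul_le_mul_of_nonneg_left (pow_le_pow_left₀ hx.1 hxy.le j) (hw j)
  · exact mul_lt_mul_of_pos_left (pow_lt_pow_left₀ hxy hx.1 hk) hwk

theorem tendsto_taylor_remainder_div_sq {f f' : ℝ → ℝ} {a f'' : ℝ}
    (hf : ∀ᶠ x in 𝓝 a, HasDerivAt f (f' x) x) (hf' : HasDerivAt f' f'' a) :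
    Tendsto (fun x => (f x - f a - f' a * (x - a)) / (x - a) ^ 2) (𝓝[≠] a) (𝓝 (f'' / 2)) := by
  refine HasDerivAt.lhopital_zero_nhdsNE (f' := fun x => f' x - f' a)
    (g' := fun x => 2 * (x - a)) ?_ ?_ ?_ ?_ ?_ ?_
  · refine eventually_nhdsWithin_of_eventually_nhds (hf.mono fun x hx => ?_)
    exact ((hx.sub_const (f a)).fun_sub
      (((hasDerivAt_id x).sub_const a).const_mul (f' a))).congr_deriv (by ring)
  · refine Eventually.of_forall fun x => ?_
    exact (((hasDerivAt_id x).sub_const a).fun_pow 2).congr_deriv (by simp)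
  · filter_upwards [self_mem_nhdsWithin] with x hx
    exact mul_ne_zero two_ne_zero (sub_ne_zero.2 hx)
  · refine tendsto_nhdsWithin_of_tendsto_nhds ?_
    have hcont : ContinuousAt (fun x => f x - f a - f' a * (x - a)) a := by
      have := hf.self_of_nhds.continuousAt
      fun_prop
    simpa using hcont.tendsto
  · refine tendsto_nhdsWithin_of_tendsto_nhds ?_
    have hcont : ContinuousAt (fun x => (x - a) ^ 2) a := by fun_prop
    simpa using hcont.tendsto
  · refine ((hasDerivAt_iff_tendsto_slope.mp hf').div_const 2).congr fun x => ?_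
    rw [slope_def_field, div_div, mul_comm]

theorem tendsto_tsum_mul_pow_taylor_remainder {w : ℕ → ℝ} {s a : ℝ}
    (hw : Summable fun k => ‖w k‖ * s ^ k) (ha : |a| < s) :
    Tendsto (fun x => ((∑' k, w k * x ^ k) - (∑' k, w k * a ^ k)
        - (∑' k : ℕ, (k : ℝ) * w k * a ^ (k - 1)) * (x - a)) / (x - a) ^ 2) (𝓝[≠] a)
      (𝓝 ((∑' k : ℕ, (k : ℝ) * ((k : ℝ) - 1) * w k * a ^ (k - 2)) / 2)) := by
  refine tendsto_taylor_remainder_div_sq ?_ (hasDerivAt_tsum_natCast_mul_mul_pow_sub_one hw ha)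
  filter_upwards [(isOpen_lt continuous_abs continuous_const).mem_nhds ha] with x hx
  exact hasDerivAt_tsum_mul_pow hw hx

theorem tendsto_div_natCast_of_tendsto_sub {u : ℕ → ℝ} {L : ℝ}
    (h : Tendsto (fun n => u (n + 1) - u n) atTop (𝓝 L)) :
    Tendsto (fun n => u n / n) atTop (𝓝 L) := by
  have hmean := h.cesaro
  simp only [Finset.sum_range_sub] at hmean
  simpa using (hmean.add (tendsto_inv_atTop_nhds_zero_nat.mul_const (u 0))).congr fun n => by ring

theorem tendsto_inv_sub_inv_of_tendsto_sub_div_sq {d : ℕ → ℝ} {L : ℝ}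
    (hd : ∀ᶠ n in atTop, d n ≠ 0) (hlim : Tendsto d atTop (𝓝 0))
    (h : Tendsto (fun n => (d n - d (n + 1)) / d n ^ 2) atTop (𝓝 L)) :
    Tendsto (fun n => (d (n + 1))⁻¹ - (d n)⁻¹) atTop (𝓝 L) := by
  have hratio : Tendsto (fun n => 1 - d n * ((d n - d (n + 1)) / d n ^ 2)) atTop (𝓝 1) := by
    simpa using tendsto_const_nhds.sub (hlim.mul h)
  have hquot := h.div hratio one_ne_zero
  rw [div_one] at hquot
  refine hquot.congr' ?_
  filter_upwards [hd, (tendsto_add_atTop_nat 1).eventually hd] with n hn hn1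
  have hratio_eq : 1 - d n * ((d n - d (n + 1)) / d n ^ 2) = d (n + 1) / d n := by
    field_simp
    ring
  simp only [Pi.div_apply, hratio_eq]
  field_simp

theorem tendsto_natCast_mul_of_tendsto_sub_div_sq {d : ℕ → ℝ} {L : ℝ} (hL : L ≠ 0)
    (hd : ∀ᶠ n in atTop, d n ≠ 0) (hlim : Tendsto d atTop (𝓝 0))
    (h : Tendsto (fun n => (d n - d (n + 1)) / d n ^ 2) atTop (𝓝 L)) :
    Tendsto (fun n : ℕ => (n : ℝ) * d n) atTop (𝓝 L⁻¹) := by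
  refine ((tendsto_div_natCast_of_tendsto_sub (u := fun n => (d n)⁻¹)
    (tendsto_inv_sub_inv_of_tendsto_sub_div_sq hd hlim h)).inv₀ hL).congr fun n => ?_
  rw [inv_div, div_inv_eq_mul]

theorem tendsto_natCast_mul_sub_of_tendsto_sub_self_div_sq {f : ℝ → ℝ} {τ L : ℝ} (hL : L ≠ 0)
    (hf : Tendsto (fun x => (f x - x) / (x - τ) ^ 2) (𝓝[≠] τ) (𝓝 L)) {c : ℕ → ℝ}
    (hc : Tendsto c atTop (𝓝[≠] τ)) (hrec : ∀ᶠ r in atTop, c (r + 1) = f (c r)) :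
    Tendsto (fun r : ℕ => (r : ℝ) * (τ - c r)) atTop (𝓝 L⁻¹) := by
  refine tendsto_natCast_mul_of_tendsto_sub_div_sq hL ?_ ?_ ((hf.comp hc).congr' ?_)
  · filter_upwards [hc.eventually self_mem_nhdsWithin] with r hr
    exact sub_ne_zero.2 (Ne.symm hr)
  · simpa using (tendsto_nhds_of_tendsto_nhdsWithin hc).const_sub τ
  · filter_upwards [hrec] with r hr
    rw [Function.comp_apply, hr]
    congr 1 <;> ring

theorem orbit_mem_Ioo_of_strictMonoOn {f : ℝ → ℝ} {τ : ℝ} (hτ : 0 < τ)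
    (hf : StrictMonoOn f (Set.Icc 0 τ)) (hfτ : f τ = τ) (hf0 : 0 < f 0) {c : ℕ → ℝ}
    (hc1 : c 1 = f 0) (hrec : ∀ r, 1 ≤ r → c (r + 1) = f (c r)) :
    ∀ r, 1 ≤ r → c r ∈ Set.Ioo 0 τ := by
  have h0 : (0 : ℝ) ∈ Set.Icc 0 τ := ⟨le_rfl, hτ.le⟩
  have hτmem : τ ∈ Set.Icc 0 τ := ⟨hτ.le, le_rfl⟩
  intro r hr
  induction r, hr using Nat.le_induction with
  | base => exact hc1 ▸ ⟨hf0, hfτ ▸ hf h0 hτmem hτ⟩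
  | succ r hr ih =>
    have hcr : c r ∈ Set.Icc 0 τ := Set.Ioo_subset_Icc_self ih
    rw [hrec r hr]
    exact ⟨hf0.trans (hf h0 hcr ih.1), hfτ ▸ hf hcr hτmem ih.2⟩

theorem tau_sub_c_asymptotics_general (w : ℕ → ℝ) (hw : ∀ k, 0 ≤ w k) (hw0 : w 0 = 1)
    (hwk : ∃ k, 1 < k ∧ 0 < w k)
    (τ : ℝ) (hτ : 0 < τ)
    (hrad : ∃ s, τ < s ∧ Summable fun k => w k * s ^ k)
    (Φ Φd : ℝ → ℝ) (Φdd : ℝ)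
    (hΦ : ∀ t, Φ t = ∑' k : ℕ, w k * t ^ k)
    (hΦd : ∀ t, Φd t = ∑' k : ℕ, (k : ℝ) * w k * t ^ (k - 1))
    (hΦdd : Φdd = ∑' k : ℕ, (k : ℝ) * ((k : ℝ) - 1) * w k * τ ^ (k - 2))
    (ρ : ℝ) (hρ : ρ = τ / Φ τ) (hρΦd : ρ * Φd τ = 1) (hΦddpos : 0 < Φdd)
    (c : ℕ → ℝ) (hc1 : c 1 = ρ) (hcrec : ∀ r, 1 ≤ r → c (r + 1) = ρ * Φ (c r))
    (hlim : Tendsto c atTop (𝓝 τ)) :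
    Tendsto (fun r : ℕ => (r : ℝ) * (τ - c r)) atTop (𝓝 (2 / (ρ * Φdd))) := by
  obtain ⟨s, hτs, hsum⟩ := hrad
  have hΦfun : Φ = fun t => ∑' k : ℕ, w k * t ^ k := funext hΦ
  have htaylor : Tendsto (fun x => (Φ x - Φ τ - Φd τ * (x - τ)) / (x - τ) ^ 2) (𝓝[≠] τ)
      (𝓝 (Φdd / 2)) := by
    rw [hΦfun, hΦd, hΦdd]
    exact tendsto_tsum_mul_pow_taylor_remainder
      (by simpa only [Real.norm_of_nonneg (hw _)] using hsum) (by rwa [abs_of_pos hτ])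
  have hmono : StrictMonoOn Φ (Set.Icc 0 τ) := by
    obtain ⟨k, hk, hwk⟩ := hwk
    rw [hΦfun]
    exact (strictMonoOn_tsum_mul_pow hw ⟨k, by omega, hwk⟩ hsum).mono
      (Set.Icc_subset_Icc_right hτs.le)
  have hΦ0 : Φ 0 = 1 := by
    rw [hΦ, tsum_eq_single 0 fun k hk => by simp [hk]]
    simp [hw0]
  have hΦτ : 1 < Φ τ := hΦ0 ▸ hmono ⟨le_rfl, hτ.le⟩ ⟨hτ.le, le_rfl⟩ hτ
  have hρpos : 0 < ρ := hρ ▸ div_pos hτ (by linarith)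
  have hρΦτ : ρ * Φ τ = τ := by
    rw [hρ]
    field_simp
  have hc : ∀ r, 1 ≤ r → c r ∈ Set.Ioo 0 τ :=
    orbit_mem_Ioo_of_strictMonoOn (f := fun x => ρ * Φ x) hτ
      (fun x hx y hy hxy => mul_lt_mul_of_pos_left (hmono hx hy hxy) hρpos) hρΦτ
      (by simpa [hΦ0]) (by simpa [hΦ0]) hcrec
  have hfixed : Tendsto (fun x => (ρ * Φ x - x) / (x - τ) ^ 2) (𝓝[≠] τ) (𝓝 (ρ * Φdd / 2)) := by
    refine (mul_div_assoc ρ Φdd 2 ▸ htaylor.const_mul ρ).congr fun x => ?_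
    rw [← mul_div_assoc]
    congr 1
    linear_combination -hρΦτ - (x - τ) * hρΦd
  have hlimit := tendsto_natCast_mul_sub_of_tendsto_sub_self_div_sq (by positivity) hfixed
    (tendsto_nhdsWithin_iff.2 ⟨hlim, eventually_atTop.2 ⟨1, fun r hr => (hc r hr).2.ne⟩⟩)
    (eventually_atTop.2 ⟨1, hcrec⟩)
  rwa [inv_div] at hlimit

/-- With `c_1 = ρ`, `c_r = ρ·Φ(c_{r-1})`, `c_r ↑ τ`, `ρ·Φ'(τ) = 1` and `Φ''(τ) > 0`
(standard simply generated setup), the sequence `1/(τ − c_r)` satisfies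
`1/(τ − c_r) = ρΦ''(τ)/2 · r + o(r)`; equivalently `r·(τ − c_r) → 2/(ρΦ''(τ))`. -/
theorem tau_sub_c_asymptotics (w : ℕ → ℝ) (hw : ∀ k, 0 ≤ w k) (hw0 : w 0 = 1)
    (hwk : ∃ k, 1 < k ∧ 0 < w k)
    (τ : ℝ) (hτ : 0 < τ)
    (hrad : ∃ s, τ < s ∧ Summable fun k => w k * s ^ k)
    (Φ Φd : ℝ → ℝ) (Φdd : ℝ)
    (hΦ : ∀ t, Φ t = ∑' k : ℕ, w k * t ^ k)
    (hΦd : ∀ t, Φd t = ∑' k : ℕ, (k : ℝ) * w k * t ^ (k - 1))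
    (hΦdd : Φdd = ∑' k : ℕ, (k : ℝ) * ((k : ℝ) - 1) * w k * τ ^ (k - 2))
    (hcrit : Φ τ = τ * Φd τ)
    (ρ : ℝ) (hρ : ρ = τ / Φ τ) (hρΦd : ρ * Φd τ = 1) (hΦddpos : 0 < Φdd)
    (c : ℕ → ℝ) (hc1 : c 1 = ρ) (hcrec : ∀ r, 1 ≤ r → c (r + 1) = ρ * Φ (c r))
    (hmono : ∀ r, 1 ≤ r → c r ≤ c (r + 1)) (hlim : Tendsto c atTop (𝓝 τ)) :
    Tendsto (fun r : ℕ => (r : ℝ) * (τ - c r)) atTop (𝓝 (2 / (ρ * Φdd))) :=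
  tau_sub_c_asymptotics_general w hw hw0 hwk τ hτ hrad Φ Φd Φdd hΦ hΦd hΦdd ρ hρ hρΦd hΦddpos c hc1
    hcrec hlim
end
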